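/- Let μ be a Borel probability measure on [0,1] with c(μ) = ∫_{[0,1]} λ dμ(λ), and for a positive definite matrix X set F_μ(X) = ∫_{[0,1]} X((1−λ)X + λI)⁻¹ dμ(λ). Then for all n×n positive definite complex matrices A and B, the generalized quantum Hellinger divergence is nonnegative: tr((1−c(μ))A + c(μ)B − A^{1/2} F_μ(A^{-1/2} B A^{-1/2}) A^{1/2}) ≥ 0; in fact the matrix (1−c(μ))A + c(μ)B − A^{1/2} F_μ(A^{-1/2} B A^{-1/2}) A^{1/2} is positive semidefinite. -/

import Mathlib

/-!
Put `S = A^{1/2}` and `X = S⁻¹ B S⁻¹`. Since `X` commutes with `Y_λ = (1 - λ)X + λI`,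
`(1 - λ)I + λX - X Y_λ⁻¹ = λ(1 - λ) (X - I) Y_λ⁻¹ (X - I) ≥ 0`,
i.e. the arithmetic mean of `I` and `X` dominates their harmonic mean `X Y_λ⁻¹`. Conjugating by `S`
gives `S X Y_λ⁻¹ S ≤ (1 - λ)A + λB` in the Loewner order, and integrating over `λ` gives the claim.
Matrices carry the L2 operator norm, which makes them a C⋆-algebra: the positive cone is then
closed and the Bochner integral (which agrees with the entrywise `mInt`) is monotone.
-/

open Matrix MeasureTheory
open scoped ComplexOrder

variable {n : Type*} [Fintype n] [DecidableEq n]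

/-- Entrywise (Bochner) integral over `[0,1]` of a matrix-valued function against `μ`. -/
noncomputable def mInt (μ : Measure ℝ) (f : ℝ → Matrix n n ℂ) : Matrix n n ℂ :=
  Matrix.of fun i j => ∫ l in Set.Icc (0:ℝ) 1, (f l) i j ∂μ

/-- `F_μ(X) = ∫_{[0,1]} X((1−λ)X + λI)⁻¹ dμ(λ)`. -/
noncomputable def Fmu (μ : Measure ℝ) (X : Matrix n n ℂ) : Matrix n n ℂ :=
  mInt μ fun l => X * ((1 - l) • X + l • (1 : Matrix n n ℂ))⁻¹

/-- The unique positive semidefinite square root of a positive (semi)definite matrix,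
obtained by applying `Real.sqrt` via the spectral (continuous) functional calculus. -/
noncomputable def msqrt (M : Matrix n n ℂ) : Matrix n n ℂ := cfc Real.sqrt M

open scoped MatrixOrder Matrix.Norms.L2Operator

lemma msqrt_eq_sqrt {A : Matrix n n ℂ} (hA : A.PosSemidef) : msqrt A = CFC.sqrt A := by
  rw [CFC.sqrt_eq_real_sqrt A hA.nonneg, cfcₙ_eq_cfc]
  rfl

lemma Matrix.PosDef.msqrt {A : Matrix n n ℂ} (hA : A.PosDef) : (msqrt A).PosDef := by
  rw [msqrt_eq_sqrt hA.posSemidef]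
  exact (IsStrictlyPositive.sqrt A hA.isStrictlyPositive).posDef

lemma msqrt_mul_msqrt {A : Matrix n n ℂ} (hA : A.PosSemidef) : msqrt A * msqrt A = A := by
  rw [msqrt_eq_sqrt hA]
  exact CFC.sqrt_mul_sqrt_self A hA.nonneg

lemma mInt_eq_setIntegral {μ : Measure ℝ} {f : ℝ → Matrix n n ℂ}
    (hf : IntegrableOn f (Set.Icc 0 1) μ) : mInt μ f = ∫ l in Set.Icc 0 1, f l ∂μ := by
  ext i j
  exact (entryLinearMap ℂ ℂ i j).toContinuousLinearMap.integral_comp_comm hf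

section Mean

variable {m 𝕜 : Type*} [RCLike 𝕜]

lemma Matrix.PosDef.one_sub_smul_add_smul {X Y : Matrix m m 𝕜} (hX : X.PosDef) (hY : Y.PosDef)
    {l : ℝ} (hl : l ∈ Set.Icc (0 : ℝ) 1) : ((1 - l) • X + l • Y).PosDef := by
  rcases hl.2.eq_or_lt with rfl | hl1
  · simpa using hY
  · exact (hX.smul (sub_pos.mpr hl1)).add_posSemidef (hY.posSemidef.smul hl.1)

variable [Fintype m] [DecidableEq m]

lemma one_sub_smul_one_add_smul_sub_mul_inv {X : Matrix m m 𝕜} {l : ℝ}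
    (hY : IsUnit ((1 - l) • X + l • (1 : Matrix m m 𝕜))) :
    (1 - l) • (1 : Matrix m m 𝕜) + l • X - X * ((1 - l) • X + l • 1)⁻¹ =
      (l * (1 - l)) • ((X - 1) * ((1 - l) • X + l • 1)⁻¹ * (X - 1)) := by
  obtain ⟨u, hu⟩ := hY
  have hcomm : Commute (X - 1) ↑u := by
    rw [hu]
    exact ((Commute.refl X).smul_right _ |>.add_right (.smul_right (.one_right X) _)).sub_left
      (.one_left _)
  have hinv : (↑u : Matrix m m 𝕜)⁻¹ = ↑u⁻¹ := (coe_units_inv u).symm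
  rw [← hu, hinv, mul_assoc, ← hcomm.units_inv_right.eq, ← mul_assoc]
  refine (Units.mul_left_inj u).mp ?_
  simp only [sub_mul, add_mul, smul_mul_assoc, mul_assoc, Units.inv_mul, mul_one]
  rw [hu]
  simp only [mul_add, mul_sub, mul_smul_comm, mul_one, one_mul]
  module

lemma Matrix.PosDef.mul_inv_le_one_sub_smul_one_add_smul {X : Matrix m m 𝕜} (hX : X.PosDef)
    {l : ℝ} (hl : l ∈ Set.Icc (0 : ℝ) 1) :
    X * ((1 - l) • X + l • (1 : Matrix m m 𝕜))⁻¹ ≤ (1 - l) • (1 : Matrix m m 𝕜) + l • X := by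
  have hY : ((1 - l) • X + l • (1 : Matrix m m 𝕜)).PosDef := hX.one_sub_smul_add_smul PosDef.one hl
  have hX1 : (X - 1)ᴴ = X - 1 := (hX.isHermitian.sub isHermitian_one).eq
  rw [Matrix.le_iff, one_sub_smul_one_add_smul_sub_mul_inv hY.isUnit]
  have hpsd := hY.inv.posSemidef.conjTranspose_mul_mul_same (X - 1)
  rw [hX1] at hpsd
  exact hpsd.smul (mul_nonneg hl.1 (sub_nonneg.2 hl.2))

end Mean

lemma ContinuousOn.matrix_inv {X m 𝕜 : Type*} [TopologicalSpace X] [Fintype m] [DecidableEq m]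
    [NormedField 𝕜] {A : X → Matrix m m 𝕜} {s : Set X} (hA : ContinuousOn A s)
    (hdet : ∀ x ∈ s, (A x).det ≠ 0) : ContinuousOn (fun x => (A x)⁻¹) s := by
  intro x hx
  have hinv : ContinuousAt Ring.inverse (A x).det := by
    simpa only [Ring.inverse_eq_inv'] using continuousAt_inv₀ (hdet x hx)
  exact (continuousAt_matrix_inv _ hinv).comp_continuousWithinAt (hA x hx)

lemma Matrix.PosDef.integrableOn_mul_inv_one_sub_smul_add_smul_one {X : Matrix n n ℂ}
    (hX : X.PosDef) (μ : Measure ℝ) [IsFiniteMeasure μ] :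
    IntegrableOn (fun l : ℝ => X * ((1 - l) • X + l • (1 : Matrix n n ℂ))⁻¹) (Set.Icc 0 1) μ := by
  refine ContinuousOn.integrableOn_compact isCompact_Icc (continuousOn_const.mul ?_)
  refine ContinuousOn.matrix_inv (by fun_prop) fun l hl => ?_
  exact (hX.one_sub_smul_add_smul PosDef.one hl).det_pos.ne'

lemma setIntegral_one_sub_smul_add_smul {E : Type*} [NormedAddCommGroup E] [NormedSpace ℝ E]
    [CompleteSpace E] (μ : Measure ℝ) [IsProbabilityMeasure μ]
    (hsupp : μ (Set.Icc (0:ℝ) 1)ᶜ = 0) (a b : E) :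
    ∫ l in Set.Icc 0 1, (1 - l) • a + l • b ∂μ =
      (1 - ∫ l in Set.Icc 0 1, l ∂μ) • a + (∫ l in Set.Icc 0 1, l ∂μ) • b := by
  have hμ : μ.restrict (Set.Icc 0 1) = μ := Measure.restrict_eq_self_of_ae_mem hsupp
  have hid : Integrable (fun l : ℝ => l) (μ.restrict (Set.Icc 0 1)) :=
    continuousOn_id.integrableOn_compact isCompact_Icc
  have hsplit : ∀ l : ℝ, (1 - l) • a + l • b = a + l • (b - a) := fun l => by module
  simp_rw [hsplit]
  rw [integral_add (integrable_const a) (hid.smul_const _), integral_smul_const, integral_const,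
    hμ, probReal_univ, one_smul]

theorem msqrt_mul_Fmu_mul_msqrt_le (μ : Measure ℝ) [IsProbabilityMeasure μ]
    (hsupp : μ (Set.Icc (0:ℝ) 1)ᶜ = 0) {A B : Matrix n n ℂ} (hA : A.PosDef) (hB : B.PosDef) :
    msqrt A * Fmu μ ((msqrt A)⁻¹ * B * (msqrt A)⁻¹) * msqrt A ≤
      (1 - ∫ l in Set.Icc (0:ℝ) 1, l ∂μ) • A + (∫ l in Set.Icc (0:ℝ) 1, l ∂μ) • B := by
  set S := msqrt A
  set X := S⁻¹ * B * S⁻¹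
  have hS : S.PosDef := hA.msqrt
  have hSdet : IsUnit S.det := (isUnit_iff_isUnit_det S).mp hS.isUnit
  have hSH : Sᴴ = S := hS.isHermitian.eq
  have hX : X.PosDef := by
    simpa only [X, conjTranspose_nonsing_inv, hSH] using
      hB.conjTranspose_mul_mul_same (mulVec_injective_of_isUnit hS.inv.isUnit)
  have hSXS : S * X * S = B := by
    simp only [X, ← mul_assoc, mul_nonsing_inv S hSdet, one_mul]
    rw [mul_assoc, nonsing_inv_mul S hSdet, mul_one]
  have hSS : S * S = A := msqrt_mul_msqrt hA.posSemidef
  set g := fun l : ℝ => X * ((1 - l) • X + l • (1 : Matrix n n ℂ))⁻¹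
  have hg : IntegrableOn g (Set.Icc 0 1) μ := hX.integrableOn_mul_inv_one_sub_smul_add_smul_one μ
  calc S * Fmu μ X * S = ∫ l in Set.Icc 0 1, S * g l * S ∂μ := by
        rw [Fmu, mInt_eq_setIntegral hg, ← integral_const_mul_of_integrable hg,
          ← integral_mul_const_of_integrable (hg.const_mul S)]
    _ ≤ ∫ l in Set.Icc 0 1, (1 - l) • A + l • B ∂μ := by
        refine setIntegral_mono_on ?_ ?_ measurableSet_Icc fun l hl => ?_
        · exact (hg.const_mul S).mul_const S
        · exact Continuous.integrableOn_Icc (by fun_prop)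
        · have hmean : S * ((1 - l) • 1 + l • X) * S = (1 - l) • A + l • B := by
            rw [← hSS, ← hSXS]
            simp only [mul_add, add_mul, mul_smul_comm, smul_mul_assoc, mul_one]
          have := star_left_conjugate_le_conjugate (hX.mul_inv_le_one_sub_smul_one_add_smul hl) S
          rwa [star_eq_conjTranspose, hSH, hmean] at this
    _ = _ := setIntegral_one_sub_smul_add_smul μ hsupp A B

/-- With `c(μ) = ∫_{[0,1]} λ dμ(λ)`, for all positive definite `A`, `B` the matrix
`(1−c(μ))A + c(μ)B − A^{1/2} F_μ(A^{-1/2} B A^{-1/2}) A^{1/2}` is positive semidefinite; in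
particular the generalized quantum Hellinger divergence (its trace) is nonnegative. -/
theorem hellinger_divergence_nonneg
    (μ : Measure ℝ) [IsProbabilityMeasure μ]
    (hsupp : μ (Set.Icc (0:ℝ) 1)ᶜ = 0)
    (A B : Matrix n n ℂ) (hA : A.PosDef) (hB : B.PosDef) :
    ((1 - ∫ l in Set.Icc (0:ℝ) 1, l ∂μ) • A + (∫ l in Set.Icc (0:ℝ) 1, l ∂μ) • B -
      msqrt A * Fmu μ ((msqrt A)⁻¹ * B * (msqrt A)⁻¹) * msqrt A).PosSemidef ∧
    0 ≤ (((1 - ∫ l in Set.Icc (0:ℝ) 1, l ∂μ) • A + (∫ l in Set.Icc (0:ℝ) 1, l ∂μ) • B -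
      msqrt A * Fmu μ ((msqrt A)⁻¹ * B * (msqrt A)⁻¹) * msqrt A).trace).re := by
  have hD := (sub_nonneg.mpr (msqrt_mul_Fmu_mul_msqrt_le μ hsupp hA hB)).posSemidef
  exact ⟨hD, (Complex.nonneg_iff.mp hD.trace_nonneg).1⟩
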